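/- arXiv:1001.5198 — 10 statements merged into one kernel-verified Lean document; each statement's English description precedes it below -/
import Mathlib

section
/- Fix w > 0 and define f₁(x₁,x₂) = ((−w²x₂ + 2(1+w²x₁²)^{3/2})/(1+w²(x₁²+x₂²)))·x₂ + 1 and f₂(x₁,x₂) = ((w²x₂ − 2(1+w²x₁²)^{3/2})/(1+w²(x₁²+x₂²)))·x₁. Then the function h_w(x₁,x₂) = x₂/√(1+w²x₁²) + x₁² + x₂² is a first integral of the system ξ₁' = f₁(ξ₁,ξ₂), ξ₂' = f₂(ξ₁,ξ₂): for any solution (ξ₁(s), ξ₂(s)), the function s ↦ h_w(ξ₁(s), ξ₂(s)) is constant. -/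
open Real

/-!
Writing `r = √(1 + w²x₁²)` and `D = 1 + w²(x₁² + x₂²) = r² + w²x₂²`, the vector field is
`(f₁, f₂) = g • (x₂, -x₁) + (1, 0)` with `g = (2r³ - w²x₂) / D`. Along the rotation field
`(x₂, -x₁)` the derivative of `h_w` is `-x₁ D / r³`, so along `(f₁, f₂)` it is
`-x₁ (2r³ - w²x₂) / r³ + ∂₁h_w = 0`.
-/

/-- The paper's `h_w(x, y)`. -/
noncomputable def firstIntegralH (w x y : ℝ) : ℝ :=
  y / √(1 + w ^ 2 * x ^ 2) + x ^ 2 + y ^ 2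

lemma HasDerivAt.firstIntegralH {w a b s : ℝ} {u v : ℝ → ℝ} (hu : HasDerivAt u a s)
    (hv : HasDerivAt v b s) :
    HasDerivAt (fun t => firstIntegralH w (u t) (v t))
      ((2 * u s - w ^ 2 * u s * v s / √(1 + w ^ 2 * u s ^ 2) ^ 3) * a
        + (1 / √(1 + w ^ 2 * u s ^ 2) + 2 * v s) * b) s := by
  have hA : 0 < 1 + w ^ 2 * u s ^ 2 := by positivity
  have hr : 0 < √(1 + w ^ 2 * u s ^ 2) := sqrt_pos.mpr hA
  have hsqrt := (((hu.fun_pow 2).const_mul (w ^ 2)).const_add 1).sqrt hA.ne'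
  refine (((hv.div hsqrt hr.ne').add (hu.fun_pow 2)).add (hv.fun_pow 2)).congr_deriv ?_
  field_simp
  ring

lemma firstIntegralH_derivative_along_field_eq_zero {w x y r : ℝ} (hr : 0 < r)
    (hr_sq : r ^ 2 = 1 + w ^ 2 * x ^ 2) :
    (2 * x - w ^ 2 * x * y / r ^ 3) *
        ((-(w ^ 2 * y) + 2 * r ^ 3) / (1 + w ^ 2 * (x ^ 2 + y ^ 2)) * y + 1)
      + (1 / r + 2 * y) * ((w ^ 2 * y - 2 * r ^ 3) / (1 + w ^ 2 * (x ^ 2 + y ^ 2)) * x) = 0 := by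
  have hD : 1 + w ^ 2 * (x ^ 2 + y ^ 2) = r ^ 2 + w ^ 2 * y ^ 2 := by rw [hr_sq]; ring
  have hD_pos : 0 < r ^ 2 + w ^ 2 * y ^ 2 := by positivity
  rw [hD]
  field_simp
  ring

theorem hw_first_integral_general (w : ℝ) (ξ₁ ξ₂ : ℝ → ℝ)
    (h₁ : ∀ s, HasDerivAt ξ₁
      ((-(w ^ 2 * ξ₂ s) + 2 * (1 + w ^ 2 * (ξ₁ s) ^ 2) ^ ((3 : ℝ) / 2)) /
          (1 + w ^ 2 * ((ξ₁ s) ^ 2 + (ξ₂ s) ^ 2)) * ξ₂ s + 1) s)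
    (h₂ : ∀ s, HasDerivAt ξ₂
      ((w ^ 2 * ξ₂ s - 2 * (1 + w ^ 2 * (ξ₁ s) ^ 2) ^ ((3 : ℝ) / 2)) /
          (1 + w ^ 2 * ((ξ₁ s) ^ 2 + (ξ₂ s) ^ 2)) * ξ₁ s) s) :
    ∀ s t,
      ξ₂ s / Real.sqrt (1 + w ^ 2 * (ξ₁ s) ^ 2) + (ξ₁ s) ^ 2 + (ξ₂ s) ^ 2 =
      ξ₂ t / Real.sqrt (1 + w ^ 2 * (ξ₁ t) ^ 2) + (ξ₁ t) ^ 2 + (ξ₂ t) ^ 2 := by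
  have hderiv (s : ℝ) : HasDerivAt (fun t => firstIntegralH w (ξ₁ t) (ξ₂ t)) 0 s := by
    have hA : 0 < 1 + w ^ 2 * ξ₁ s ^ 2 := by positivity
    convert (h₁ s).firstIntegralH (h₂ s) using 1
    rw [rpow_div_two_eq_sqrt _ hA.le, rpow_ofNat,
      firstIntegralH_derivative_along_field_eq_zero (sqrt_pos.mpr hA) (sq_sqrt hA.le)]
  exact is_const_of_deriv_eq_zero (fun s => (hderiv s).differentiableAt)
    (fun s => (hderiv s).deriv)

/-- `h_w(x₁,x₂) = x₂/√(1+w²x₁²) + x₁² + x₂²` is a first integral of the system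
`ξ₁' = f₁(ξ₁,ξ₂)`, `ξ₂' = f₂(ξ₁,ξ₂)`. -/
theorem hw_first_integral (w : ℝ) (hw : 0 < w) (ξ₁ ξ₂ : ℝ → ℝ)
    (h₁ : ∀ s, HasDerivAt ξ₁
      ((-(w ^ 2 * ξ₂ s) + 2 * (1 + w ^ 2 * (ξ₁ s) ^ 2) ^ ((3 : ℝ) / 2)) /
          (1 + w ^ 2 * ((ξ₁ s) ^ 2 + (ξ₂ s) ^ 2)) * ξ₂ s + 1) s)
    (h₂ : ∀ s, HasDerivAt ξ₂
      ((w ^ 2 * ξ₂ s - 2 * (1 + w ^ 2 * (ξ₁ s) ^ 2) ^ ((3 : ℝ) / 2)) /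
          (1 + w ^ 2 * ((ξ₁ s) ^ 2 + (ξ₂ s) ^ 2)) * ξ₁ s) s) :
    ∀ s t,
      ξ₂ s / Real.sqrt (1 + w ^ 2 * (ξ₁ s) ^ 2) + (ξ₁ s) ^ 2 + (ξ₂ s) ^ 2 =
      ξ₂ t / Real.sqrt (1 + w ^ 2 * (ξ₁ t) ^ 2) + (ξ₁ t) ^ 2 + (ξ₂ t) ^ 2 :=
  hw_first_integral_general w ξ₁ ξ₂ h₁ h₂
end

section
/- For any w > 0, the range of the function h_w(x,y) = y/√(1+w²x²) + x² + y² on ℝ² is the interval [−1/4, ∞). -/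
/-!
Since `√(1 + w²x²) ≥ 1`, the first term is at least `-|y|`, and `-|y| + y² ≥ -1/4`.
On the line `x = 0` the function is `y + y²`, which takes every value `≥ -1/4`.
-/

open Real

lemma neg_abs_le_div_sqrt_one_add {t : ℝ} (ht : 0 ≤ t) (y : ℝ) : -|y| ≤ y / √(1 + t) := by
  have hs : 1 ≤ √(1 + t) := Real.one_le_sqrt.mpr (by linarith)
  have habs : |y / √(1 + t)| ≤ |y| := by
    rw [abs_div, abs_of_pos (by linarith : (0 : ℝ) < √(1 + t))]
    exact div_le_self (abs_nonneg y) hs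
  exact (abs_le.mp habs).1

lemma neg_one_div_four_le_neg_abs_add_sq (y : ℝ) : -(1 / 4) ≤ -|y| + y ^ 2 := by
  nlinarith [sq_nonneg (|y| - 1 / 2), sq_abs y]

lemma exists_add_sq_eq {z : ℝ} (hz : -(1 / 4) ≤ z) : ∃ y : ℝ, y + y ^ 2 = z := by
  refine ⟨-(1 / 2) + √(z + 1 / 4), ?_⟩
  have hsq : √(z + 1 / 4) ^ 2 = z + 1 / 4 := Real.sq_sqrt (by linarith)
  linear_combination hsq

theorem hw_range_general (w : ℝ) :
    Set.range (fun p : ℝ × ℝ =>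
        p.2 / Real.sqrt (1 + w ^ 2 * p.1 ^ 2) + p.1 ^ 2 + p.2 ^ 2)
      = Set.Ici (-(1 / 4) : ℝ) := by
  ext z
  simp only [Set.mem_range, Set.mem_Ici, Prod.exists]
  constructor
  · rintro ⟨x, y, rfl⟩
    have h_first := neg_abs_le_div_sqrt_one_add (by positivity : 0 ≤ w ^ 2 * x ^ 2) y
    linarith [neg_one_div_four_le_neg_abs_add_sq y, sq_nonneg x]
  · intro hz
    obtain ⟨y, hy⟩ := exists_add_sq_eq hz
    exact ⟨0, y, by simpa using hy⟩

/-- The range of `h_w(x,y) = y/√(1+w²x²) + x² + y²` is `[−1/4, ∞)`. -/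
theorem hw_range (w : ℝ) (hw : 0 < w) :
    Set.range (fun p : ℝ × ℝ =>
        p.2 / Real.sqrt (1 + w ^ 2 * p.1 ^ 2) + p.1 ^ 2 + p.2 ^ 2)
      = Set.Ici (-(1 / 4) : ℝ) :=
  hw_range_general w
end

section
/- For any w > 0, the level set h_w⁻¹(−1/4) = {(0, −1/2)}, where h_w(x,y) = y/√(1+w²x²) + x² + y². -/
open Real

/-!
With `t = 1 / √(1 + w²x²) ∈ (0, 1]`, completing the square gives
`y t + x² + y² + 1/4 = x² + (y + t/2)² + (1 - t²)/4`, a sum of three nonnegative terms.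
It vanishes only if `x = 0`, `t = 1` and `y = -t/2 = -1/2`.
-/

theorem eq_zero_and_eq_neg_half_of_mul_add_sq_add_sq_eq {t x y : ℝ} (ht₀ : 0 ≤ t) (ht₁ : t ≤ 1)
    (h : y * t + x ^ 2 + y ^ 2 = -(1 / 4)) : x = 0 ∧ y = -(1 / 2) := by
  have hsum : x ^ 2 + (y + t / 2) ^ 2 + (1 - t ^ 2) / 4 = 0 := by linear_combination h
  have hx : x ^ 2 = 0 := by nlinarith [sq_nonneg (y + t / 2)]
  have hy : (y + t / 2) ^ 2 = 0 := by nlinarith [sq_nonneg x]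
  have ht : t = 1 := by nlinarith
  refine ⟨(pow_eq_zero_iff two_ne_zero).mp hx, ?_⟩
  linear_combination (pow_eq_zero_iff two_ne_zero).mp hy - ht / 2

theorem hw_level_min_general (w : ℝ) :
    {p : ℝ × ℝ |
        p.2 / Real.sqrt (1 + w ^ 2 * p.1 ^ 2) + p.1 ^ 2 + p.2 ^ 2 = -(1 / 4)}
      = {((0 : ℝ), (-(1 / 2) : ℝ))} := by
  ext ⟨x, y⟩
  simp only [Set.mem_ofPred_eq, Set.mem_singleton_iff, Prod.mk.injEq]
  constructor
  · intro h
    have hs : 1 ≤ √(1 + w ^ 2 * x ^ 2) := one_le_sqrt.mpr (by nlinarith [sq_nonneg (w * x)])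
    rw [div_eq_mul_inv] at h
    exact eq_zero_and_eq_neg_half_of_mul_add_sq_add_sq_eq (by positivity)
      (inv_le_one_of_one_le₀ hs) h
  · rintro ⟨rfl, rfl⟩
    norm_num

/-- The level set `h_w⁻¹(−1/4)` is the single point `(0, −1/2)`. -/
theorem hw_level_min (w : ℝ) (hw : 0 < w) :
    {p : ℝ × ℝ |
        p.2 / Real.sqrt (1 + w ^ 2 * p.1 ^ 2) + p.1 ^ 2 + p.2 ^ 2 = -(1 / 4)}
      = {((0 : ℝ), (-(1 / 2) : ℝ))} :=
  hw_level_min_general w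
end

section
/- For any w > 0, every M > −1/4 is a regular value of h_w(x,y) = y/√(1+w²x²) + x² + y², i.e. the gradient of h_w is nonzero at every point of h_w⁻¹(M). -/
open Real

/-! With `s = √(1 + w²x²)`, the partial derivatives of `h_w` are `∂_y h_w = 1/s + 2y` and
`∂_x h_w = x (2 - w² y / s³)`. At a critical point the first forces `y < 0`, so the bracket in
the second is positive and `x = 0`; then `s = 1`, `y = -1/2`, and the critical value is
`-1/2 + 1/4 = -1/4`. -/

section Slices

variable {𝕜 F : Type*} [NontriviallyNormedField 𝕜] [NormedAddCommGroup F] [NormedSpace 𝕜 F]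
  {f : 𝕜 × 𝕜 → F} {f' : 𝕜 × 𝕜 →L[𝕜] F} {p : 𝕜 × 𝕜}

theorem HasFDerivAt.hasDerivAt_slice_fst (hf : HasFDerivAt f f' p) :
    HasDerivAt (fun t => f (t, p.2)) (f' (1, 0)) p.1 :=
  hf.comp_hasDerivAt p.1 ((hasDerivAt_id p.1).prodMk (hasDerivAt_const p.1 p.2))

theorem HasFDerivAt.hasDerivAt_slice_snd (hf : HasFDerivAt f f' p) :
    HasDerivAt (fun t => f (p.1, t)) (f' (0, 1)) p.2 :=
  hf.comp_hasDerivAt p.2 ((hasDerivAt_const p.2 p.1).prodMk (hasDerivAt_id p.2))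

end Slices

theorem hasDerivAt_div_sqrt_one_add_mul_sq {a x : ℝ} (b : ℝ) (hx : 0 < 1 + a * x ^ 2) :
    HasDerivAt (fun t => b / √(1 + a * t ^ 2))
      (-(a * b * x) / √(1 + a * x ^ 2) ^ 3) x := by
  have hsqrt := (((hasDerivAt_pow 2 x).const_mul a).const_add 1).sqrt hx.ne'
  refine ((hasDerivAt_const x b).div hsqrt (sqrt_pos.2 hx).ne').congr_deriv ?_
  have hs : √(1 + a * x ^ 2) ^ 3 = √(1 + a * x ^ 2) ^ 2 * √(1 + a * x ^ 2) := by ring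
  rw [hs, sq_sqrt hx.le]
  field_simp
  ring

theorem critical_value_eq_neg_one_quarter {w x y s : ℝ} (hs0 : 0 < s)
    (hs : s ^ 2 = 1 + w ^ 2 * x ^ 2) (hx : -(w ^ 2 * y * x) / s ^ 3 + 2 * x = 0)
    (hy : 1 / s + 2 * y = 0) :
    y / s + x ^ 2 + y ^ 2 = -(1 / 4) := by
  have hy_neg : y < 0 := by
    have : 0 < 1 / s := by positivity
    linarith
  have hfactor_pos : 0 < 2 - w ^ 2 * y / s ^ 3 := by
    have : w ^ 2 * y / s ^ 3 ≤ 0 :=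
      div_nonpos_of_nonpos_of_nonneg (mul_nonpos_of_nonneg_of_nonpos (sq_nonneg w) hy_neg.le)
        (by positivity)
    linarith
  have hx0 : x = 0 := by
    have : x * (2 - w ^ 2 * y / s ^ 3) = 0 := by rw [← hx]; ring
    exact (mul_eq_zero.1 this).resolve_right hfactor_pos.ne'
  have hs1 : s = 1 := by
    rw [hx0] at hs
    nlinarith
  have hy' : y = -(1 / 2) := by
    rw [hs1] at hy
    linarith
  rw [hx0, hs1, hy']
  norm_num

theorem hw_regular_value_general (w M : ℝ) (hM : -(1 / 4) < M) :
    ∀ p : ℝ × ℝ,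
      p.2 / Real.sqrt (1 + w ^ 2 * p.1 ^ 2) + p.1 ^ 2 + p.2 ^ 2 = M →
      fderiv ℝ (fun q : ℝ × ℝ =>
        q.2 / Real.sqrt (1 + w ^ 2 * q.1 ^ 2) + q.1 ^ 2 + q.2 ^ 2) p ≠ 0 := by
  rintro ⟨x, y⟩ hp hcrit
  have hpos : 0 < 1 + w ^ 2 * x ^ 2 := by positivity
  have hdiff : DifferentiableAt ℝ (fun q : ℝ × ℝ =>
      q.2 / √(1 + w ^ 2 * q.1 ^ 2) + q.1 ^ 2 + q.2 ^ 2) (x, y) := by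
    fun_prop (disch := positivity)
  have hzero := hcrit ▸ hdiff.hasFDerivAt
  have hx := hzero.hasDerivAt_slice_fst.unique
    (((hasDerivAt_div_sqrt_one_add_mul_sq y hpos).add (hasDerivAt_pow 2 x)).add_const (y ^ 2))
  have hy_slice : HasDerivAt (fun t => t / √(1 + w ^ 2 * x ^ 2) + x ^ 2 + t ^ 2)
      (1 / √(1 + w ^ 2 * x ^ 2) + 2 * y) y := by
    refine ((((hasDerivAt_id' y).div_const _).add_const (x ^ 2)).add
      (hasDerivAt_pow 2 y)).congr_deriv ?_
    ring
  have hy := hzero.hasDerivAt_slice_snd.unique hy_slice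
  have hvalue := critical_value_eq_neg_one_quarter (sqrt_pos.2 hpos) (sq_sqrt hpos.le)
    (by simpa using hx.symm) (by simpa using hy.symm)
  linarith

/-- Every `M > −1/4` is a regular value of `h_w`: the differential of `h_w` is
nonzero at every point of the level set `h_w⁻¹(M)`. -/
theorem hw_regular_value (w M : ℝ) (hw : 0 < w) (hM : -(1 / 4) < M) :
    ∀ p : ℝ × ℝ,
      p.2 / Real.sqrt (1 + w ^ 2 * p.1 ^ 2) + p.1 ^ 2 + p.2 ^ 2 = M →
      fderiv ℝ (fun q : ℝ × ℝ =>
        q.2 / Real.sqrt (1 + w ^ 2 * q.1 ^ 2) + q.1 ^ 2 + q.2 ^ 2) p ≠ 0 :=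
  hw_regular_value_general w M hM
end

section
/- Fix w > 0 and M > −1/4. The maximum of x² + y² on the level set {(x,y) : h_w(x,y) = M} equals r₂(M)² where r₂(M) = (√(1+4M) + 1)/2, and the minimum equals r₁(M)² where r₁(M) = |(√(1+4M) − 1)/2|. -/
open Real

/-- On the level set `h_w = M`, the maximum of `x² + y²` is `r₂(M)²` with
`r₂(M) = (√(1+4M)+1)/2`, and the minimum is `r₁(M)²` with
`r₁(M) = |(√(1+4M)−1)/2|`. -/
theorem hw_level_radii (w M : ℝ) (hw : 0 < w) (hM : -(1 / 4) < M) :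
    IsGreatest
      {r : ℝ | ∃ p : ℝ × ℝ,
        p.2 / Real.sqrt (1 + w ^ 2 * p.1 ^ 2) + p.1 ^ 2 + p.2 ^ 2 = M ∧
        r = p.1 ^ 2 + p.2 ^ 2}
      (((Real.sqrt (1 + 4 * M) + 1) / 2) ^ 2) ∧
    IsLeast
      {r : ℝ | ∃ p : ℝ × ℝ,
        p.2 / Real.sqrt (1 + w ^ 2 * p.1 ^ 2) + p.1 ^ 2 + p.2 ^ 2 = M ∧
        r = p.1 ^ 2 + p.2 ^ 2}
      (|(Real.sqrt (1 + 4 * M) - 1) / 2| ^ 2) := by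
  have h14 : (0:ℝ) < 1 + 4 * M := by linarith
  set s := Real.sqrt (1 + 4 * M) with hs
  have hs2 : s ^ 2 = 1 + 4 * M := Real.sq_sqrt h14.le
  have hs0 : 0 ≤ s := Real.sqrt_nonneg _
  -- key bounds for any point on the level set
  have key : ∀ x y : ℝ, y / Real.sqrt (1 + w ^ 2 * x ^ 2) + x ^ 2 + y ^ 2 = M →
      ((s - 1) / 2) ^ 2 ≤ x ^ 2 + y ^ 2 ∧ x ^ 2 + y ^ 2 ≤ ((s + 1) / 2) ^ 2 := by
    intro x y h
    set t := Real.sqrt (1 + w ^ 2 * x ^ 2) with ht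
    have ht1 : 1 ≤ t := by
      have h1 : (1:ℝ) ≤ 1 + w ^ 2 * x ^ 2 := by nlinarith [sq_nonneg (w * x)]
      have := Real.sqrt_le_sqrt h1
      simpa [ht] using this
    have ht0 : t ≠ 0 := by linarith
    have h2 : y / t = M - (x ^ 2 + y ^ 2) := by linarith
    have hy : y = (M - (x ^ 2 + y ^ 2)) * t := (div_eq_iff ht0).mp h2
    have hy2 : y ^ 2 = (M - (x ^ 2 + y ^ 2)) ^ 2 * t ^ 2 := by nth_rewrite 1 [hy]; ring
    have ht2 : 1 ≤ t ^ 2 := by nlinarith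
    have hk : (M - (x ^ 2 + y ^ 2)) ^ 2 ≤ x ^ 2 + y ^ 2 := by
      nlinarith [hy2, ht2, sq_nonneg (M - (x ^ 2 + y ^ 2)), sq_nonneg x]
    have habs : |2 * (x ^ 2 + y ^ 2) - 2 * M - 1| ≤ s := by
      have h1 : (2 * (x ^ 2 + y ^ 2) - 2 * M - 1) ^ 2 ≤ s ^ 2 := by nlinarith [hk]
      calc |2 * (x ^ 2 + y ^ 2) - 2 * M - 1|
          = Real.sqrt ((2 * (x ^ 2 + y ^ 2) - 2 * M - 1) ^ 2) := (Real.sqrt_sq_eq_abs _).symm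
        _ ≤ Real.sqrt (s ^ 2) := Real.sqrt_le_sqrt h1
        _ = s := Real.sqrt_sq hs0
    have hb := abs_le.mp habs
    constructor
    · nlinarith [hs2, hb.1]
    · nlinarith [hs2, hb.2]
  have hsimp0 : Real.sqrt (1 + w ^ 2 * (0:ℝ) ^ 2) = 1 := by norm_num
  constructor
  · constructor
    · refine ⟨((0 : ℝ), -((s + 1) / 2)), ?_, by ring⟩
      simp only [hsimp0]
      field_simp
      nlinarith [hs2]
    · rintro r ⟨⟨x, y⟩, hp, rfl⟩
      exact (key x y hp).2
  · constructor
    · refine ⟨((0 : ℝ), (s - 1) / 2), ?_, ?_⟩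
      · simp only [hsimp0]
        field_simp
        nlinarith [hs2]
      · rw [sq_abs]; ring
    · rintro r ⟨⟨x, y⟩, hp, rfl⟩
      rw [sq_abs]
      exact (key x y hp).1
end

section
/- Fix w > 0 and M > −1/4. If (x,y) is a critical point of the function R(x,y) = x² + y² restricted to the level set h_w⁻¹(M), then x = 0 and y is either −(√(1+4M)+1)/2 or (√(1+4M)−1)/2. -/
/-! With `s = √(1 + w²x²)`, the Lagrange condition `∇R = λ ∇h_w` reads
`2x = λ (2x - w²xy/s³)` and `2y = λ (1/s + 2y)`. If `x ≠ 0`, dividing the first equation by `x`,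
multiplying it by `y` and subtracting `s²` times the second gives `λ (s² + w²y²) = 0`, so `λ = 0`
and then `2x = 0`. On the axis `x = 0` the level set is `y + y² = M`. -/

open Real ContinuousLinearMap

theorem ContinuousLinearMap.smul_fst_add_smul_snd_inj {R : Type*} [CommSemiring R]
    [TopologicalSpace R] [ContinuousMul R] [ContinuousAdd R] {a b c d : R} :
    a • fst R R R + b • snd R R R = c • fst R R R + d • snd R R R ↔ a = c ∧ b = d := by
  refine ⟨fun h => ⟨?_, ?_⟩, fun ⟨hac, hbd⟩ => hac ▸ hbd ▸ rfl⟩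
  · simpa using congr($h (1, 0))
  · simpa using congr($h (0, 1))

theorem hasFDerivAt_fst_sq_add_snd_sq (p : ℝ × ℝ) :
    HasFDerivAt (fun q : ℝ × ℝ => q.1 ^ 2 + q.2 ^ 2)
      ((2 * p.1) • fst ℝ ℝ ℝ + (2 * p.2) • snd ℝ ℝ ℝ) p := by
  have h := ((hasFDerivAt_fst (p := p) (𝕜 := ℝ)).pow 2).add (hasFDerivAt_snd.pow 2)
  exact h.congr_fderiv (by simp)

theorem hasFDerivAt_snd_div_sqrt (w : ℝ) (p : ℝ × ℝ) :
    HasFDerivAt (fun q : ℝ × ℝ => q.2 / √(1 + w ^ 2 * q.1 ^ 2))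
      ((-(p.2 * w ^ 2 * p.1) / √(1 + w ^ 2 * p.1 ^ 2) ^ 3) • fst ℝ ℝ ℝ
        + (1 / √(1 + w ^ 2 * p.1 ^ 2)) • snd ℝ ℝ ℝ) p := by
  have hpos : 0 < 1 + w ^ 2 * p.1 ^ 2 := by positivity
  have hs : 0 < √(1 + w ^ 2 * p.1 ^ 2) := sqrt_pos.2 hpos
  have hsqrt := (((hasFDerivAt_fst (p := p) (𝕜 := ℝ)).pow 2).const_mul (w ^ 2)
    |>.const_add 1).sqrt hpos.ne'
  have hinv := (hasDerivAt_inv hs.ne').comp_hasFDerivAt p hsqrt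
  have h := (hasFDerivAt_snd (p := p) (𝕜 := ℝ)).mul hinv
  simp only [Function.comp_def] at h
  refine h.congr_fderiv ?_
  ext
  · simp
    field_simp
  · simp

theorem hasFDerivAt_snd_div_sqrt_add_sq_add_sq (w : ℝ) (p : ℝ × ℝ) :
    HasFDerivAt (fun q : ℝ × ℝ => q.2 / √(1 + w ^ 2 * q.1 ^ 2) + q.1 ^ 2 + q.2 ^ 2)
      ((-(p.2 * w ^ 2 * p.1) / √(1 + w ^ 2 * p.1 ^ 2) ^ 3 + 2 * p.1) • fst ℝ ℝ ℝ
        + (1 / √(1 + w ^ 2 * p.1 ^ 2) + 2 * p.2) • snd ℝ ℝ ℝ) p := by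
  have h := ((hasFDerivAt_snd_div_sqrt w p).add ((hasFDerivAt_fst (p := p) (𝕜 := ℝ)).pow 2)).add
    ((hasFDerivAt_snd (p := p) (𝕜 := ℝ)).pow 2)
  refine h.congr_fderiv ?_
  ext <;> simp

theorem eq_zero_of_lagrange_condition {x y s w lam : ℝ} (hs : s ≠ 0)
    (hx : 2 * x = lam * (-(y * w ^ 2 * x) / s ^ 3 + 2 * x))
    (hy : 2 * y = lam * (1 / s + 2 * y)) : x = 0 := by
  by_contra hx0
  field_simp at hx hy
  have hlam : lam * (s ^ 2 + y ^ 2 * w ^ 2) = 0 := by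
    linear_combination y * hx - s ^ 2 * hy
  have : lam = 0 := (mul_eq_zero.1 hlam).resolve_right (by positivity)
  subst this
  simp [hs] at hx

theorem eq_roots_of_add_sq_eq {y M : ℝ} (h : y + y ^ 2 = M) :
    y = -((√(1 + 4 * M) + 1) / 2) ∨ y = (√(1 + 4 * M) - 1) / 2 := by
  have hsqrt : √(1 + 4 * M) = |2 * y + 1| := by
    rw [← h, ← sqrt_sq_eq_abs]
    ring_nf
  rcases abs_cases (2 * y + 1) with ⟨habs, _⟩ | ⟨habs, _⟩
  · right; rw [hsqrt, habs]; ring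
  · left; rw [hsqrt, habs]; ring

theorem hw_critical_points_general (w M : ℝ)
    (p : ℝ × ℝ)
    (hp : p.2 / Real.sqrt (1 + w ^ 2 * p.1 ^ 2) + p.1 ^ 2 + p.2 ^ 2 = M)
    (hcrit : ∃ lam : ℝ,
      fderiv ℝ (fun q : ℝ × ℝ => q.1 ^ 2 + q.2 ^ 2) p =
        lam • fderiv ℝ (fun q : ℝ × ℝ =>
          q.2 / Real.sqrt (1 + w ^ 2 * q.1 ^ 2) + q.1 ^ 2 + q.2 ^ 2) p) :
    p.1 = 0 ∧
      (p.2 = -((Real.sqrt (1 + 4 * M) + 1) / 2) ∨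
       p.2 = (Real.sqrt (1 + 4 * M) - 1) / 2) := by
  obtain ⟨lam, hlam⟩ := hcrit
  rw [(hasFDerivAt_fst_sq_add_snd_sq p).fderiv,
    (hasFDerivAt_snd_div_sqrt_add_sq_add_sq w p).fderiv, smul_add, smul_smul, smul_smul, smul_fst_add_smul_snd_inj] at hlam
  have hs : √(1 + w ^ 2 * p.1 ^ 2) ≠ 0 := (sqrt_pos.2 (by positivity)).ne'
  have hx : p.1 = 0 := eq_zero_of_lagrange_condition hs hlam.1 hlam.2
  refine ⟨hx, eq_roots_of_add_sq_eq ?_⟩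
  simpa [hx] using hp

/-- If `(x,y)` is a critical point of `R(x,y) = x² + y²` restricted to the level
set `h_w⁻¹(M)` (i.e. `∇R` is parallel to `∇h_w` there), then `x = 0` and
`y = −(√(1+4M)+1)/2` or `y = (√(1+4M)−1)/2`. -/
theorem hw_critical_points (w M : ℝ) (hw : 0 < w) (hM : -(1 / 4) < M)
    (p : ℝ × ℝ)
    (hp : p.2 / Real.sqrt (1 + w ^ 2 * p.1 ^ 2) + p.1 ^ 2 + p.2 ^ 2 = M)
    (hcrit : ∃ lam : ℝ,
      fderiv ℝ (fun q : ℝ × ℝ => q.1 ^ 2 + q.2 ^ 2) p =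
        lam • fderiv ℝ (fun q : ℝ × ℝ =>
          q.2 / Real.sqrt (1 + w ^ 2 * q.1 ^ 2) + q.1 ^ 2 + q.2 ^ 2) p) :
    p.1 = 0 ∧
      (p.2 = -((Real.sqrt (1 + 4 * M) + 1) / 2) ∨
       p.2 = (Real.sqrt (1 + 4 * M) - 1) / 2) :=
  hw_critical_points_general w M p hp hcrit
end

section
/- Fix M > −1/4 and w > 0, and set A = √(−1 + Mw² + √(1 + (1+2M)w² + M²w⁴))/(√2·w) and B = (2 + 2M²w⁴ + w² + 2(Mw² − 1)√(1 + (1+2M)w² + M²w⁴))/w². Define ρ₁(u) = A cos u and ρ₂(u) = (−1 + √(1 + 4M + B cos²u)·sin u)/(2√(1 + w²A² cos²u)). Then h_w(ρ₁(u), ρ₂(u)) = M for all u ∈ [0, 2π]. -/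
/-!
For fixed `x`, the equation `h_w(x, y) = M` is a quadratic in `y` whose roots are
`y = (-1 ± r) / (2√(1 + w²x²))` with `r² = 1 + 4(M - x²)(1 + w²x²)`. With `x = A cos u` and
`t = A²`, the right-hand side factors as `(1 + 4M + B cos²u) sin²u` exactly when `t` is the
positive root of `4w²t² - 4(Mw² - 1)t - (1 + 4M) = 0` and `B = 4w²t²`; the closed forms of `A`
and `B` are these values, and `r = √(1 + 4M + B cos²u) sin u` runs through both roots.
-/

open Real

noncomputable def heartFunction (w x y : ℝ) : ℝ :=
  y / √(1 + w ^ 2 * x ^ 2) + x ^ 2 + y ^ 2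

theorem heartFunction_eq_of_sq_eq {w x M r : ℝ}
    (hr : r ^ 2 = 1 + 4 * (M - x ^ 2) * (1 + w ^ 2 * x ^ 2)) :
    heartFunction w x ((-1 + r) / (2 * √(1 + w ^ 2 * x ^ 2))) = M := by
  have hD : 0 < √(1 + w ^ 2 * x ^ 2) := sqrt_pos.mpr (by positivity)
  have hD2 : √(1 + w ^ 2 * x ^ 2) ^ 2 = 1 + w ^ 2 * x ^ 2 := sq_sqrt (by positivity)
  unfold heartFunction
  field_simp
  linear_combination hr - 4 * (M - x ^ 2) * hD2

section Coefficients

variable {M w S t : ℝ}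

theorem heart_quadratic (hw : w ≠ 0) (hS : S ^ 2 = 1 + (1 + 2 * M) * w ^ 2 + M ^ 2 * w ^ 4)
    (ht : t = (-1 + M * w ^ 2 + S) / (2 * w ^ 2)) :
    4 * w ^ 2 * t ^ 2 - 4 * (M * w ^ 2 - 1) * t - (1 + 4 * M) = 0 := by
  subst ht
  field_simp
  linear_combination 4 * hS

theorem heart_B_eq (hw : w ≠ 0) (hS : S ^ 2 = 1 + (1 + 2 * M) * w ^ 2 + M ^ 2 * w ^ 4)
    (ht : t = (-1 + M * w ^ 2 + S) / (2 * w ^ 2)) :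
    (2 + 2 * M ^ 2 * w ^ 4 + w ^ 2 + 2 * (M * w ^ 2 - 1) * S) / w ^ 2 = 4 * w ^ 2 * t ^ 2 := by
  subst ht
  field_simp
  linear_combination -4 * hS

theorem heart_discriminant_factor
    (hroot : 4 * w ^ 2 * t ^ 2 - 4 * (M * w ^ 2 - 1) * t - (1 + 4 * M) = 0) (c : ℝ) :
    1 + 4 * (M - t * c ^ 2) * (1 + w ^ 2 * (t * c ^ 2)) =
      (1 + 4 * M + 4 * w ^ 2 * t ^ 2 * c ^ 2) * (1 - c ^ 2) := by
  linear_combination -c ^ 2 * hroot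

end Coefficients

theorem sq_sqrt_heart_discr {M : ℝ} (hM : -(1 / 4) < M) (w : ℝ) :
    √(1 + (1 + 2 * M) * w ^ 2 + M ^ 2 * w ^ 4) ^ 2 = 1 + (1 + 2 * M) * w ^ 2 + M ^ 2 * w ^ 4 :=
  sq_sqrt (by nlinarith [sq_nonneg (M * w ^ 2 - 1), sq_nonneg w])

theorem sq_eq_heart_root {M w A : ℝ} (hM : -(1 / 4) < M)
    (hA : A = √(-1 + M * w ^ 2 + √(1 + (1 + 2 * M) * w ^ 2 + M ^ 2 * w ^ 4)) / (√2 * w)) :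
    A ^ 2 = (-1 + M * w ^ 2 + √(1 + (1 + 2 * M) * w ^ 2 + M ^ 2 * w ^ 4)) / (2 * w ^ 2) := by
  have hS := sq_sqrt_heart_discr hM w
  -- `√(p² + (1 + 4M)w²) ≥ |p|` for `p = Mw² - 1`
  have hroot_nonneg : 0 ≤ -1 + M * w ^ 2 + √(1 + (1 + 2 * M) * w ^ 2 + M ^ 2 * w ^ 4) := by
    have := abs_le_sqrt (x := M * w ^ 2 - 1) (y := 1 + (1 + 2 * M) * w ^ 2 + M ^ 2 * w ^ 4)
      (by nlinarith [sq_nonneg w])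
    linarith [neg_abs_le (M * w ^ 2 - 1)]
  rw [hA, div_pow, mul_pow, sq_sqrt hroot_nonneg, sq_sqrt zero_le_two]

/-- The curve `(ρ₁, ρ₂)` lies on the level set `h_w⁻¹(M)`. -/
theorem heart_parametrization_on_level (M w : ℝ) (hM : -(1 / 4) < M) (hw : 0 < w)
    (A B : ℝ)
    (hA : A = Real.sqrt (-1 + M * w ^ 2 +
        Real.sqrt (1 + (1 + 2 * M) * w ^ 2 + M ^ 2 * w ^ 4)) / (Real.sqrt 2 * w))
    (hB : B = (2 + 2 * M ^ 2 * w ^ 4 + w ^ 2 + 2 * (M * w ^ 2 - 1) *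
        Real.sqrt (1 + (1 + 2 * M) * w ^ 2 + M ^ 2 * w ^ 4)) / w ^ 2)
    (ρ₁ ρ₂ : ℝ → ℝ)
    (hρ₁ : ∀ u, ρ₁ u = A * Real.cos u)
    (hρ₂ : ∀ u, ρ₂ u =
      (-1 + Real.sqrt (1 + 4 * M + B * (Real.cos u) ^ 2) * Real.sin u) /
        (2 * Real.sqrt (1 + w ^ 2 * A ^ 2 * (Real.cos u) ^ 2))) :
    ∀ u ∈ Set.Icc (0 : ℝ) (2 * Real.pi),
      ρ₂ u / Real.sqrt (1 + w ^ 2 * (ρ₁ u) ^ 2) + (ρ₁ u) ^ 2 + (ρ₂ u) ^ 2 = M := by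
  have hS := sq_sqrt_heart_discr hM w
  have hA2 := sq_eq_heart_root hM hA
  have hroot := heart_quadratic hw.ne' hS hA2
  have hB4 : B = 4 * w ^ 2 * (A ^ 2) ^ 2 := hB.trans (heart_B_eq hw.ne' hS hA2)
  intro u _
  have hE : 0 ≤ 1 + 4 * M + B * cos u ^ 2 := by
    rw [hB4]; nlinarith [sq_nonneg (w * A ^ 2 * cos u)]
  rw [hρ₁, hρ₂, show w ^ 2 * A ^ 2 * cos u ^ 2 = w ^ 2 * (A * cos u) ^ 2 by ring]
  refine heartFunction_eq_of_sq_eq ?_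
  rw [mul_pow, sq_sqrt hE, sin_sq, mul_pow, heart_discriminant_factor hroot, hB4]
end

section
/- With the parametrization ρ(u) = (ρ₁(u), ρ₂(u)) of the level set h_w⁻¹(M) as defined (A, B as above), the curve ρ : [0,2π] → ℝ² is regular, i.e. (ρ₁'(u), ρ₂'(u)) ≠ (0,0) for all u, and is a closed curve: ρ(0) = ρ(2π). -/
/-!
The first coordinate `A cos u` has derivative `-A sin u`, which vanishes only where `sin u = 0`.
There `cos² u = 1` and `cos²` is stationary, so both square roots in `ρ₂` are stationary and
`ρ₂'(u) = cos u · √(1 + 4M + B) / (2 √(1 + w²A²)) ≠ 0`. The constants are harmless because the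
discriminant `1 + (1 + 2M)w² + M²w⁴` equals `(Mw² - 1)² + (1 + 4M)w²`: this makes `A > 0`, and
makes the numerator of `B` the perfect square `(√disc + Mw² - 1)²`. Closedness is periodicity.
-/

open Real

lemma hasDerivAt_cos_sq_of_sin_eq_zero {u : ℝ} (hu : sin u = 0) :
    HasDerivAt (fun x => cos x ^ 2) 0 u := by
  simpa [hu] using (hasDerivAt_cos u).fun_pow 2

lemma hasDerivAt_sqrt_add_mul_cos_sq_of_sin_eq_zero {c k u : ℝ} (hu : sin u = 0)
    (h : c + k * cos u ^ 2 ≠ 0) :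
    HasDerivAt (fun x => √(c + k * cos x ^ 2)) 0 u := by
  simpa using (((hasDerivAt_cos_sq_of_sin_eq_zero hu).const_mul k).const_add c).sqrt h

lemma hasDerivAt_neg_one_add_mul_sin_div_of_stationary {g h : ℝ → ℝ} {u : ℝ}
    (hg : HasDerivAt g 0 u) (hh : HasDerivAt h 0 u) (h0 : h u ≠ 0) :
    HasDerivAt (fun x => (-1 + g x * sin x) / h x) (g u * cos u / h u) u := by
  refine (((hg.fun_mul (hasDerivAt_sin u)).const_add (-1)).fun_div hh h0).congr_deriv ?_
  field_simp
  ring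

lemma heart_curve_deriv_ne_zero {a b c k : ℝ} (ha : a ≠ 0) (hbc : 0 < c + b) (hk : 0 < 1 + k)
    (u : ℝ) :
    (deriv (fun x => a * cos x) u,
      deriv (fun x => (-1 + √(c + b * cos x ^ 2) * sin x) / (2 * √(1 + k * cos x ^ 2))) u)
      ≠ (0, 0) := by
  by_cases hu : sin u = 0
  · have hcos : cos u ^ 2 = 1 := by nlinarith [sin_sq_add_cos_sq u]
    have hnum_deriv := hasDerivAt_sqrt_add_mul_cos_sq_of_sin_eq_zero hu
      (show c + b * cos u ^ 2 ≠ 0 by rw [hcos, mul_one]; exact hbc.ne')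
    have hden_deriv : HasDerivAt (fun x => 2 * √(1 + k * cos x ^ 2)) 0 u := by
      simpa using (hasDerivAt_sqrt_add_mul_cos_sq_of_sin_eq_zero hu
        (show 1 + k * cos u ^ 2 ≠ 0 by rw [hcos, mul_one]; exact hk.ne')).const_mul 2
    have hden : 2 * √(1 + k * cos u ^ 2) ≠ 0 := by rw [hcos, mul_one]; positivity
    have hderiv :=
      hasDerivAt_neg_one_add_mul_sin_div_of_stationary hnum_deriv hden_deriv hden
    have hcos_ne : cos u ≠ 0 := by rintro h; simp [h] at hcos
    have hnum : √(c + b * cos u ^ 2) * cos u ≠ 0 := by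
      rw [hcos, mul_one]; exact mul_ne_zero (sqrt_pos.2 hbc).ne' hcos_ne
    simp [hderiv.deriv, hnum, hden]
  · simp [((hasDerivAt_cos u).const_mul a).deriv, ha, hu]

lemma heart_disc_eq (M w : ℝ) :
    1 + (1 + 2 * M) * w ^ 2 + M ^ 2 * w ^ 4 = (M * w ^ 2 - 1) ^ 2 + (1 + 4 * M) * w ^ 2 := by
  ring

lemma one_sub_lt_sqrt_heart_disc {M w : ℝ} (hM : 0 < 1 + 4 * M) (hw : w ≠ 0) :
    1 - M * w ^ 2 < √(1 + (1 + 2 * M) * w ^ 2 + M ^ 2 * w ^ 4) := by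
  calc 1 - M * w ^ 2 ≤ |M * w ^ 2 - 1| := by rw [abs_sub_comm]; exact le_abs_self _
    _ = √((M * w ^ 2 - 1) ^ 2) := (sqrt_sq_eq_abs _).symm
    _ < √(1 + (1 + 2 * M) * w ^ 2 + M ^ 2 * w ^ 4) := by
      rw [heart_disc_eq]
      exact sqrt_lt_sqrt (sq_nonneg _) (lt_add_of_pos_right _ (by positivity))

lemma heart_B_numerator_eq_sq (M w : ℝ) (hM : 0 ≤ 1 + 4 * M) :
    2 + 2 * M ^ 2 * w ^ 4 + w ^ 2 + 2 * (M * w ^ 2 - 1) *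
        √(1 + (1 + 2 * M) * w ^ 2 + M ^ 2 * w ^ 4) =
      (√(1 + (1 + 2 * M) * w ^ 2 + M ^ 2 * w ^ 4) + M * w ^ 2 - 1) ^ 2 := by
  have hS := sq_sqrt (heart_disc_eq M w ▸ by positivity :
    0 ≤ 1 + (1 + 2 * M) * w ^ 2 + M ^ 2 * w ^ 4)
  linear_combination -hS

/-- The parametrization `(ρ₁, ρ₂)` of the heart-shaped curve is regular and closed. -/
theorem heart_parametrization_regular_closed (M w : ℝ) (hM : -(1 / 4) < M) (hw : 0 < w)
    (A B : ℝ)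
    (hA : A = Real.sqrt (-1 + M * w ^ 2 +
        Real.sqrt (1 + (1 + 2 * M) * w ^ 2 + M ^ 2 * w ^ 4)) / (Real.sqrt 2 * w))
    (hB : B = (2 + 2 * M ^ 2 * w ^ 4 + w ^ 2 + 2 * (M * w ^ 2 - 1) *
        Real.sqrt (1 + (1 + 2 * M) * w ^ 2 + M ^ 2 * w ^ 4)) / w ^ 2)
    (ρ₁ ρ₂ : ℝ → ℝ)
    (hρ₁ : ∀ u, ρ₁ u = A * Real.cos u)
    (hρ₂ : ∀ u, ρ₂ u =
      (-1 + Real.sqrt (1 + 4 * M + B * (Real.cos u) ^ 2) * Real.sin u) /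
        (2 * Real.sqrt (1 + w ^ 2 * A ^ 2 * (Real.cos u) ^ 2))) :
    (∀ u ∈ Set.Icc (0 : ℝ) (2 * Real.pi), (deriv ρ₁ u, deriv ρ₂ u) ≠ (0, 0)) ∧
    (ρ₁ 0, ρ₂ 0) = (ρ₁ (2 * Real.pi), ρ₂ (2 * Real.pi)) := by
  have hM' : 0 < 1 + 4 * M := by linarith
  have hA_pos : 0 < A := by
    rw [hA]
    have := one_sub_lt_sqrt_heart_disc hM' hw.ne'
    exact div_pos (sqrt_pos.2 (by linarith)) (by positivity)
  have hB_nonneg : 0 ≤ B := by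
    rw [hB, heart_B_numerator_eq_sq M w hM'.le]
    positivity
  refine ⟨fun u _ => ?_, ?_⟩
  · rw [funext hρ₁, funext hρ₂]
    exact heart_curve_deriv_ne_zero hA_pos.ne' (by linarith) (by positivity) u
  · simp [hρ₁, hρ₂]
end

section
/- Let z, θ : ℝ → ℝ be differentiable with z(s) > 0, satisfying θ' = 2 + cos(θ)/z and z' = sin(θ). Then the function s ↦ z(s)(cos θ(s) + z(s)) is constant. -/
open Real

/-- Multiplied by `z`, the `cos θ / z` term of `θ'` cancels `sin θ cos θ` exactly (this needs
`z ≠ 0`), and the `2` in `θ'` balances the two `z sin θ` terms. -/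
theorem hasDerivAt_delaunay_first_integral {z θ : ℝ → ℝ} {s : ℝ} (hzs : z s ≠ 0)
    (hθ : HasDerivAt θ (2 + cos (θ s) / z s) s) (hz : HasDerivAt z (sin (θ s)) s) :
    HasDerivAt (fun s => z s * (cos (θ s) + z s)) 0 s := by
  have h : HasDerivAt (fun s => z s * (cos (θ s) + z s))
      (sin (θ s) * (cos (θ s) + z s) + z s * (-sin (θ s) * (2 + cos (θ s) / z s) + sin (θ s))) s :=
    hz.mul (hθ.cos.add hz)
  convert h using 1
  field_simp
  ring

/-- For the Delaunay ODE `θ' = 2 + cos θ / z`, `z' = sin θ` with `z > 0`,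
the quantity `z (cos θ + z)` is constant. -/
theorem delaunay_first_integral (z θ : ℝ → ℝ)
    (hzpos : ∀ s, 0 < z s)
    (hθ : ∀ s, HasDerivAt θ (2 + Real.cos (θ s) / z s) s)
    (hz : ∀ s, HasDerivAt z (Real.sin (θ s)) s) :
    ∀ s t, z s * (Real.cos (θ s) + z s) = z t * (Real.cos (θ t) + z t) := by
  have hderiv (s : ℝ) := hasDerivAt_delaunay_first_integral (hzpos s).ne' (hθ s) (hz s)
  exact is_const_of_deriv_eq_zero (fun s => (hderiv s).differentiableAt) fun s => (hderiv s).deriv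
end

section
/- Fix a nonzero k > −1/4. The maximum of the function G(z,θ) = −cos(θ)(2z + cos θ)/z² subject to the constraint z(cos θ + z) = k with z > 0 is 4√(1+4k)/(1+√(1+4k))², and the minimum is −4√(1+4k)/(−1+√(1+4k))². Consequently the quotient of the maximum by the minimum equals −((−1+√(1+4k))/(1+√(1+4k)))². -/
/-!
On the level set `z (cos θ + z) = k` we have `cos θ = k / z - z`, so the curvature becomes
`G = 1 - k² / z⁴`, an increasing function of `z > 0`. Writing `k = (s² - 1) / 4` with
`s = √(1 + 4k)`, the constraint `|cos θ| ≤ 1` confines `z` to the interval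
`[|s - 1| / 2, (1 + s) / 2]`, and the extremes of `G` are its values at the two endpoints.
-/

open Real Set

def gaussCurvatureValues (k : ℝ) : Set ℝ :=
  {g | ∃ z θ : ℝ, 0 < z ∧ z * (cos θ + z) = k ∧ g = -(cos θ * (2 * z + cos θ)) / z ^ 2}

/-- The curvature on the level set `k`, as a function of `z`. -/
noncomputable def gaussOnLevel (k z : ℝ) : ℝ := 1 - (k / z ^ 2) ^ 2

theorem neg_mul_two_mul_add_div_sq_eq_gaussOnLevel {z c k : ℝ} (hz : z ≠ 0)
    (hk : z * (c + z) = k) : -(c * (2 * z + c)) / z ^ 2 = gaussOnLevel k z := by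
  subst hk
  unfold gaussOnLevel
  field_simp
  ring

theorem mem_gaussCurvatureValues_iff {k g : ℝ} :
    g ∈ gaussCurvatureValues k ↔ ∃ z, 0 < z ∧ |k - z ^ 2| ≤ z ∧ g = gaussOnLevel k z := by
  constructor
  · rintro ⟨z, θ, hz, hk, rfl⟩
    have hcos : cos θ * z = k - z ^ 2 := by linear_combination hk
    refine ⟨z, hz, ?_, neg_mul_two_mul_add_div_sq_eq_gaussOnLevel hz.ne' hk⟩
    rw [← hcos, abs_mul, abs_of_pos hz]
    exact mul_le_of_le_one_left hz.le (abs_cos_le_one θ)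
  · rintro ⟨z, hz, hkz, rfl⟩
    have hc : |(k - z ^ 2) / z| ≤ 1 := by
      rwa [abs_div, abs_of_pos hz, div_le_one hz]
    obtain ⟨hc₁, hc₂⟩ := abs_le.mp hc
    have hk : z * (cos (arccos ((k - z ^ 2) / z)) + z) = k := by
      rw [cos_arccos hc₁ hc₂]
      field_simp
      ring
    exact ⟨z, _, hz, hk, (neg_mul_two_mul_add_div_sq_eq_gaussOnLevel hz.ne' hk).symm⟩

/-- With `k = (s² - 1) / 4`, the condition `z² - z ≤ k ≤ z² + z` reads `|2z - 1| ≤ s ≤ 2z + 1`. -/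
theorem abs_sub_sq_le_iff_mem_Icc {s z : ℝ} (hs : 0 ≤ s) (hz : 0 < z) :
    |(s ^ 2 - 1) / 4 - z ^ 2| ≤ z ↔ z ∈ Icc (|s - 1| / 2) ((1 + s) / 2) := by
  rw [abs_le, mem_Icc, div_le_iff₀ two_pos, abs_le]
  constructor
  · rintro ⟨h₁, h₂⟩
    refine ⟨⟨?_, ?_⟩, ?_⟩ <;> nlinarith
  · rintro ⟨⟨h₁, h₂⟩, h₃⟩
    constructor <;> nlinarith

theorem gaussCurvatureValues_eq_image {s : ℝ} (hs : 0 < s) (hs1 : s ≠ 1) :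
    gaussCurvatureValues ((s ^ 2 - 1) / 4) =
      gaussOnLevel ((s ^ 2 - 1) / 4) '' Icc (|s - 1| / 2) ((1 + s) / 2) := by
  have hpos : 0 < |s - 1| / 2 := by positivity
  ext g
  rw [mem_gaussCurvatureValues_iff]
  constructor
  · rintro ⟨z, hz, hkz, rfl⟩
    exact ⟨z, (abs_sub_sq_le_iff_mem_Icc hs.le hz).mp hkz, rfl⟩
  · rintro ⟨z, hz, rfl⟩
    have hz0 : 0 < z := hpos.trans_le hz.1
    exact ⟨z, hz0, (abs_sub_sq_le_iff_mem_Icc hs.le hz0).mpr hz, rfl⟩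

theorem monotoneOn_gaussOnLevel (k : ℝ) : MonotoneOn (gaussOnLevel k) (Ioi 0) := by
  intro a ha b _ hab
  have ha : 0 < a := ha
  simp only [gaussOnLevel, div_pow, sub_le_sub_iff_left]
  gcongr

theorem gaussOnLevel_one_add_half {s : ℝ} (hs : 0 < s) :
    gaussOnLevel ((s ^ 2 - 1) / 4) ((1 + s) / 2) = 4 * s / (1 + s) ^ 2 := by
  unfold gaussOnLevel
  field_simp
  ring

theorem gaussOnLevel_abs_sub_one_half {s : ℝ} (hs1 : s ≠ 1) :
    gaussOnLevel ((s ^ 2 - 1) / 4) (|s - 1| / 2) = -(4 * s) / (-1 + s) ^ 2 := by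
  have hs1' : -1 + s ≠ 0 := by contrapose! hs1; linarith
  rw [gaussOnLevel, div_pow |s - 1|, sq_abs, show s - 1 = -1 + s by ring]
  field_simp
  ring

/-- Extremes of the Gauss curvature `G(z,θ) = −cos θ (2z + cos θ)/z²` of a Delaunay
surface on the level set `z(cos θ + z) = k`, and the value of their quotient. -/
theorem delaunay_gauss_extremes (k : ℝ) (hk : -(1 / 4) < k) (hk0 : k ≠ 0) :
    IsGreatest {g : ℝ | ∃ z θ : ℝ, 0 < z ∧ z * (Real.cos θ + z) = k ∧
        g = -(Real.cos θ * (2 * z + Real.cos θ)) / z ^ 2}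
      (4 * Real.sqrt (1 + 4 * k) / (1 + Real.sqrt (1 + 4 * k)) ^ 2) ∧
    IsLeast {g : ℝ | ∃ z θ : ℝ, 0 < z ∧ z * (Real.cos θ + z) = k ∧
        g = -(Real.cos θ * (2 * z + Real.cos θ)) / z ^ 2}
      (-(4 * Real.sqrt (1 + 4 * k)) / (-1 + Real.sqrt (1 + 4 * k)) ^ 2) ∧
    (4 * Real.sqrt (1 + 4 * k) / (1 + Real.sqrt (1 + 4 * k)) ^ 2) /
        (-(4 * Real.sqrt (1 + 4 * k)) / (-1 + Real.sqrt (1 + 4 * k)) ^ 2)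
      = -(((-1 + Real.sqrt (1 + 4 * k)) / (1 + Real.sqrt (1 + 4 * k))) ^ 2) := by
  obtain ⟨s, hs, rfl⟩ : ∃ s, 0 < s ∧ k = (s ^ 2 - 1) / 4 :=
    ⟨√(1 + 4 * k), sqrt_pos.2 (by linarith), by rw [sq_sqrt (by linarith)]; ring⟩
  have hsqrt : √(1 + 4 * ((s ^ 2 - 1) / 4)) = s := by
    rw [show 1 + 4 * ((s ^ 2 - 1) / 4) = s ^ 2 by ring, sqrt_sq hs.le]
  have hs1 : s ≠ 1 := by rintro rfl; norm_num at hk0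
  have hIcc : |s - 1| / 2 ≤ (1 + s) / 2 := by
    gcongr
    exact abs_sub_le_iff.2 ⟨by linarith, by linarith⟩
  have hmono := (monotoneOn_gaussOnLevel ((s ^ 2 - 1) / 4)).mono
    (Icc_subset_Ioi_iff hIcc |>.2 (by positivity))
  have hmax := hmono.map_isGreatest (isGreatest_Icc hIcc)
  have hmin := hmono.map_isLeast (isLeast_Icc hIcc)
  rw [← gaussCurvatureValues_eq_image hs hs1, gaussOnLevel_one_add_half hs] at hmax
  rw [← gaussCurvatureValues_eq_image hs hs1, gaussOnLevel_abs_sub_one_half hs1] at hmin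
  have hs1' : -1 + s ≠ 0 := by contrapose! hs1; linarith
  rw [hsqrt]
  refine ⟨hmax, hmin, ?_⟩
  field_simp
end
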